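/- B is invertible and B⁻¹ = M; equivalently, B·M equals the (p+3)×(p+3) identity matrix. -/
import Mathlib


/-- The Neumann–Zagier matrix `𝐁` (w.r.t. the preferred longitude) of the ideal
triangulation `X_n` of a hyperbolic twist knot complement for even `n`
(rows/columns `1, …, p+3` of the paper are indexed here by `0, …, p+2`). -/
def Beven (p : ℕ) : Matrix (Fin (p + 3)) (Fin (p + 3)) ℚ :=
  Matrix.of fun i j =>
    if i.1 = 0 then (if j.1 = p + 2 then -1 else 0)
    else if i.1 = 1 then (if j.1 = 0 then -1 else if j.1 = p + 2 then 1 else 0)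
    else if i.1 ≤ p then
      (if j.1 + 3 = i.1 then -1
       else if j.1 + 2 = i.1 then 2
       else if j.1 + 1 = i.1 then -1 else 0)
    else if i.1 = p + 1 then
      (if j.1 + 1 = p then -1 else if j.1 = p then 1
       else if j.1 = p + 1 then 1 else if j.1 = p + 2 then -1 else 0)
    else (if j.1 = p + 1 then 2 else 0)

/-- The claimed inverse `M = 𝐁⁻¹` for even `n`. -/
def Meven (p : ℕ) : Matrix (Fin (p + 3)) (Fin (p + 3)) ℚ :=
  Matrix.of fun i j =>
    if i.1 < p then
      (if j.1 ≤ 1 then -((i.1 : ℚ) + 1)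
       else if 2 ≤ j.1 ∧ j.1 ≤ i.1 + 1 then -((i.1 : ℚ) + 2 - (j.1 : ℚ))
       else 0)
    else if i.1 = p then
      (if j.1 = 0 then -((p : ℚ) + 1)
       else if j.1 = 1 then -(p : ℚ)
       else if 2 ≤ j.1 ∧ j.1 ≤ p then -((p : ℚ) + 1 - (j.1 : ℚ))
       else if j.1 = p + 1 then 1
       else if j.1 = p + 2 then -1/2
       else 0)
    else if i.1 = p + 1 then (if j.1 = p + 2 then 1/2 else 0)
    else (if j.1 = 0 then -1 else 0)

set_option linter.unreachableTactic false
set_option linter.unnecessarySimpa false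
set_option linter.unusedTactic false

private lemma sum_restrict {n : ℕ} (s : Finset (Fin n)) (f : Fin n → ℚ)
    (h : ∀ k, k ∉ s → f k = 0) : ∑ k, f k = ∑ k ∈ s, f k :=
  (Finset.sum_subset s.subset_univ (fun x _ hx => h x hx)).symm

private lemma Mlt {p : ℕ} (k j : Fin (p+3)) (h : k.1 < p) :
    Meven p k j = if j.1 ≤ 1 then -((k.1:ℚ)+1)
      else if 2 ≤ j.1 ∧ j.1 ≤ k.1+1 then -((k.1:ℚ)+2-(j.1:ℚ)) else 0 := by
  simp only [Meven, Matrix.of_apply, if_pos h]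

private lemma Mp {p : ℕ} (k j : Fin (p+3)) (h : k.1 = p) :
    Meven p k j = if j.1 = 0 then -((p:ℚ)+1) else if j.1 = 1 then -(p:ℚ)
      else if 2 ≤ j.1 ∧ j.1 ≤ p then -((p:ℚ)+1-(j.1:ℚ))
      else if j.1 = p+1 then 1 else if j.1 = p+2 then -1/2 else 0 := by
  simp only [Meven, Matrix.of_apply]; rw [if_neg (by omega), if_pos h]

private lemma Mp1 {p : ℕ} (k j : Fin (p+3)) (h : k.1 = p+1) :
    Meven p k j = if j.1 = p+2 then 1/2 else 0 := by
  simp only [Meven, Matrix.of_apply]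
  rw [if_neg (by omega), if_neg (by omega), if_pos h]

private lemma Mtop {p : ℕ} (k j : Fin (p+3)) (h : k.1 = p+2) :
    Meven p k j = if j.1 = 0 then -1 else 0 := by
  simp only [Meven, Matrix.of_apply]
  rw [if_neg (by omega), if_neg (by omega), if_neg (by omega)]

set_option maxHeartbeats 1000000 in
/-- Section 4.1 of the paper (even twist knots): `𝐁` is invertible with the
explicit inverse `M`; equivalently `𝐁 · M = 1`. -/
theorem stmt_16 (p : ℕ) (hp : 2 ≤ p) : Beven p * Meven p = 1 := by
  ext i j
  rw [Matrix.mul_apply, Matrix.one_apply]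
  obtain ⟨m, hm⟩ := i
  rcases eq_or_ne m 0 with rfl | hm0
  · -- row 0
    rw [sum_restrict {⟨p+2, by omega⟩} _ ?_]
    · rw [Finset.sum_singleton,
        show Beven p ⟨0, hm⟩ ⟨p+2, by omega⟩ = -1 by
          simp only [Beven, Matrix.of_apply, Fin.val_mk]
          split_ifs <;> first | rfl | contradiction | (exfalso; omega),
        Mtop _ _ (by simp)]
      simp only [Fin.ext_iff, Fin.val_mk]
      split_ifs <;> first | contradiction | (exfalso; omega) | (push_cast; all_goals ring1) | norm_num
    · intro k hk
      simp only [Finset.mem_singleton, Fin.ext_iff, Fin.val_mk] at hk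
      have hB : Beven p ⟨0, hm⟩ k = 0 := by
        simp only [Beven, Matrix.of_apply, Fin.val_mk]
        split_ifs <;> first | rfl | contradiction | (exfalso; omega)
      rw [hB, zero_mul]
  rcases eq_or_ne m 1 with rfl | hm1
  · -- row 1
    rw [sum_restrict {⟨0, by omega⟩, ⟨p+2, by omega⟩} _ ?_]
    · rw [Finset.sum_insert (by simp only [Finset.mem_singleton, Fin.ext_iff, Fin.val_mk]; omega),
        Finset.sum_singleton,
        show Beven p ⟨1, hm⟩ ⟨0, by omega⟩ = -1 by
          simp only [Beven, Matrix.of_apply, Fin.val_mk]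
          split_ifs <;> first | rfl | contradiction | (exfalso; omega),
        show Beven p ⟨1, hm⟩ ⟨p+2, by omega⟩ = 1 by
          simp only [Beven, Matrix.of_apply, Fin.val_mk]
          split_ifs <;> first | rfl | contradiction | (exfalso; omega),
        Mlt _ _ (by simpa using by omega), Mtop _ _ (by simp)]
      simp only [Fin.ext_iff, Fin.val_mk]
      split_ifs <;> first | contradiction | (exfalso; omega) | (push_cast; all_goals ring1) | norm_num
    · intro k hk
      simp only [Finset.mem_insert, Finset.mem_singleton, Fin.ext_iff, Fin.val_mk] at hk
      have hB : Beven p ⟨1, hm⟩ k = 0 := by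
        simp only [Beven, Matrix.of_apply, Fin.val_mk]
        split_ifs <;> first | rfl | contradiction | (exfalso; omega)
      rw [hB, zero_mul]
  by_cases hmid : m ≤ p
  · rcases eq_or_ne m 2 with rfl | hm2
    · -- row 2
      rw [sum_restrict {⟨0, by omega⟩, ⟨1, by omega⟩} _ ?_]
      · rw [Finset.sum_insert (by simp only [Finset.mem_singleton, Fin.ext_iff, Fin.val_mk]; omega),
          Finset.sum_singleton,
          show Beven p ⟨2, hm⟩ ⟨0, by omega⟩ = 2 by
            simp only [Beven, Matrix.of_apply, Fin.val_mk]
            split_ifs <;> first | rfl | contradiction | (exfalso; omega),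
          show Beven p ⟨2, hm⟩ ⟨1, by omega⟩ = -1 by
            simp only [Beven, Matrix.of_apply, Fin.val_mk]
            split_ifs <;> first | rfl | contradiction | (exfalso; omega),
          Mlt _ _ (by simpa using by omega), Mlt _ _ (by simpa using by omega)]
        simp only [Fin.ext_iff, Fin.val_mk]
        split_ifs <;>
          first
          | contradiction | (exfalso; omega) | (push_cast; all_goals ring1)
          | (rw [show (j : ℕ) = 2 by omega]; push_cast; all_goals ring1) | norm_num
      · intro k hk
        simp only [Finset.mem_insert, Finset.mem_singleton, Fin.ext_iff, Fin.val_mk] at hk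
        have hB : Beven p ⟨2, hm⟩ k = 0 := by
          simp only [Beven, Matrix.of_apply, Fin.val_mk]
          split_ifs <;> first | rfl | contradiction | (exfalso; omega)
        rw [hB, zero_mul]
    · -- generic rows 3 ≤ m ≤ p
      obtain ⟨r, rfl⟩ : ∃ r, m = r + 3 := ⟨m - 3, by omega⟩
      rw [sum_restrict {⟨r, by omega⟩, ⟨r+1, by omega⟩, ⟨r+2, by omega⟩} _ ?_]
      · rw [Finset.sum_insert (by simp only [Finset.mem_insert, Finset.mem_singleton, Fin.ext_iff, Fin.val_mk]; omega),
          Finset.sum_insert (by simp only [Finset.mem_singleton, Fin.ext_iff, Fin.val_mk]; omega),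
          Finset.sum_singleton,
          show Beven p ⟨r+3, hm⟩ ⟨r, by omega⟩ = -1 by
            simp only [Beven, Matrix.of_apply, Fin.val_mk]
            split_ifs <;> first | rfl | contradiction | (exfalso; omega),
          show Beven p ⟨r+3, hm⟩ ⟨r+1, by omega⟩ = 2 by
            simp only [Beven, Matrix.of_apply, Fin.val_mk]
            split_ifs <;> first | rfl | contradiction | (exfalso; omega),
          show Beven p ⟨r+3, hm⟩ ⟨r+2, by omega⟩ = -1 by
            simp only [Beven, Matrix.of_apply, Fin.val_mk]
            split_ifs <;> first | rfl | contradiction | (exfalso; omega),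
          Mlt _ _ (by simpa using by omega), Mlt _ _ (by simpa using by omega),
          Mlt _ _ (by simpa using by omega)]
        simp only [Fin.ext_iff, Fin.val_mk]
        split_ifs <;>
          first
          | contradiction | (exfalso; omega) | (push_cast; all_goals ring1)
          | (rw [show (j : ℕ) = r + 3 by omega]; push_cast; all_goals ring1)
          | (rw [show (j : ℕ) = r + 2 by omega]; push_cast; all_goals ring1) | norm_num
      · intro k hk
        simp only [Finset.mem_insert, Finset.mem_singleton, Fin.ext_iff, Fin.val_mk] at hk
        have hB : Beven p ⟨r + 3, hm⟩ k = 0 := by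
          simp only [Beven, Matrix.of_apply, Fin.val_mk]
          split_ifs <;> first | rfl | contradiction | (exfalso; omega)
        rw [hB, zero_mul]
  rcases eq_or_ne m (p+1) with rfl | hmp1
  · -- row p+1
    obtain ⟨q, rfl⟩ : ∃ q, p = q + 2 := ⟨p - 2, by omega⟩
    rw [sum_restrict {⟨q+1, by omega⟩, ⟨q+2, by omega⟩, ⟨q+3, by omega⟩, ⟨q+4, by omega⟩} _ ?_]
    · rw [Finset.sum_insert (by simp only [Finset.mem_insert, Finset.mem_singleton, Fin.ext_iff, Fin.val_mk]; omega),
        Finset.sum_insert (by simp only [Finset.mem_insert, Finset.mem_singleton, Fin.ext_iff, Fin.val_mk]; omega),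
        Finset.sum_insert (by simp only [Finset.mem_singleton, Fin.ext_iff, Fin.val_mk]; omega),
        Finset.sum_singleton,
        show Beven (q+2) ⟨q+3, hm⟩ ⟨q+1, by omega⟩ = -1 by
          simp only [Beven, Matrix.of_apply, Fin.val_mk]
          split_ifs <;> first | rfl | contradiction | (exfalso; omega),
        show Beven (q+2) ⟨q+3, hm⟩ ⟨q+2, by omega⟩ = 1 by
          simp only [Beven, Matrix.of_apply, Fin.val_mk]
          split_ifs <;> first | rfl | contradiction | (exfalso; omega),
        show Beven (q+2) ⟨q+3, hm⟩ ⟨q+3, by omega⟩ = 1 by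
          simp only [Beven, Matrix.of_apply, Fin.val_mk]
          split_ifs <;> first | rfl | contradiction | (exfalso; omega),
        show Beven (q+2) ⟨q+3, hm⟩ ⟨q+4, by omega⟩ = -1 by
          simp only [Beven, Matrix.of_apply, Fin.val_mk]
          split_ifs <;> first | rfl | contradiction | (exfalso; omega),
        Mlt _ _ (by simpa using by omega), Mp _ _ (by simp),
        Mp1 _ _ (by simp), Mtop _ _ (by simp)]
      simp only [Fin.ext_iff, Fin.val_mk]
      split_ifs <;>
        first
        | contradiction | (exfalso; omega) | (push_cast; all_goals ring1)
        | (rw [show (j : ℕ) = q + 3 by omega]; push_cast; all_goals ring1) | norm_num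
    · intro k hk
      simp only [Finset.mem_insert, Finset.mem_singleton, Fin.ext_iff, Fin.val_mk] at hk
      have hB : Beven (q+2) ⟨q + 3, hm⟩ k = 0 := by
        simp only [Beven, Matrix.of_apply, Fin.val_mk]
        split_ifs <;> first | rfl | contradiction | (exfalso; omega)
      rw [hB, zero_mul]
  · -- row p+2
    have hmval : m = p + 2 := by omega
    subst hmval
    rw [sum_restrict {⟨p+1, by omega⟩} _ ?_]
    · rw [Finset.sum_singleton,
        show Beven p ⟨p+2, hm⟩ ⟨p+1, by omega⟩ = 2 by
          simp only [Beven, Matrix.of_apply, Fin.val_mk]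
          split_ifs <;> first | rfl | contradiction | (exfalso; omega),
        Mp1 _ _ (by simp)]
      simp only [Fin.ext_iff, Fin.val_mk]
      split_ifs <;> first | contradiction | (exfalso; omega) | (push_cast; all_goals ring1) | norm_num
    · intro k hk
      simp only [Finset.mem_singleton, Fin.ext_iff, Fin.val_mk] at hk
      have hB : Beven p ⟨p + 2, hm⟩ k = 0 := by
        simp only [Beven, Matrix.of_apply, Fin.val_mk]
        split_ifs <;> first | rfl | contradiction | (exfalso; omega)
      rw [hB, zero_mul]
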